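/- For every k ≥ 2, let σ_k be the permutation of length 2k defined by σ_k(2i−1) = 2i+1 for 1 ≤ i ≤ k−1, σ_k(2k−1) = 2k, σ_k(2) = 1, and σ_k(2i) = 2i−2 for 2 ≤ i ≤ k (so σ_2 = 3142, σ_3 = 315264, σ_4 = 31527486, …). Then σ_k is simple and avoids each of 321, 2341, 3412, and 4123. Consequently, the class Av(321, 2341, 3412, 4123) contains infinitely many simple permutations. -/
import Mathlib


/-- A permutation of arbitrary length: a length `n` together with a
bijection of `Fin n` (0-indexed positions and values). -/
abbrev PermAny : Type := Σ n : ℕ, Equiv.Perm (Fin n)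

/-- `β` is contained as a pattern in `π`. -/
def ContainsPat {k n : ℕ} (β : Equiv.Perm (Fin k)) (π : Equiv.Perm (Fin n)) : Prop :=
  ∃ f : Fin k → Fin n, StrictMono f ∧ ∀ a b : Fin k, β a < β b ↔ π (f a) < π (f b)

/-- `Av(B)`: the permutations avoiding every member of `B`. -/
def AvSet (B : Set PermAny) : Set PermAny :=
  {p | ∀ b ∈ B, ¬ ContainsPat b.2 p.2}

/-- A permutation class: closed downwards under pattern containment. -/
def IsPermClass (C : Set PermAny) : Prop :=
  ∀ p ∈ C, ∀ q : PermAny, ContainsPat q.2 p.2 → q ∈ C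

/-- The positions `a,…,b` form an interval of `π`: the corresponding values
form a set of consecutive integers. -/
def IsIntervalAt {n : ℕ} (π : Equiv.Perm (Fin n)) (a b : Fin n) : Prop :=
  a ≤ b ∧ ∃ c : ℕ,
    (Finset.Icc a b).image (fun i => (π i : ℕ)) = Finset.Icc c (c + ((b : ℕ) - (a : ℕ)))

/-- A permutation is simple when all of its intervals are trivial. -/
def IsSimplePerm {n : ℕ} (π : Equiv.Perm (Fin n)) : Prop :=
  ∀ a b : Fin n, IsIntervalAt π a b → a = b ∨ ((a : ℕ) = 0 ∧ (b : ℕ) = n - 1)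

/-- `Z(B;π;g)`: the set of `B`-avoiding permutations of length `k + ‖g‖` whose
`k` smallest values occupy the positions prescribed by the gap vector `g`
and form the pattern `π`.  (0-indexed: entry `π r` sits at position
`g 0 + ⋯ + g r + r`.) -/
def ZSet (B : Set PermAny) {k : ℕ} (π : Equiv.Perm (Fin k)) (g : Fin (k + 1) → ℕ) :
    Set (Equiv.Perm (Fin (k + ∑ j, g j))) :=
  {p | (⟨k + ∑ j, g j, p⟩ : PermAny) ∈ AvSet B ∧
    ∀ r : Fin k, ∀ i : Fin (k + ∑ j, g j),
      (i : ℕ) = (∑ j ∈ Finset.univ.filter fun j : Fin (k + 1) => (j : ℕ) ≤ (r : ℕ), g j)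
          + (r : ℕ) →
      (p i : ℕ) = (π r : ℕ)}

/-- `J(π)`: the set of gap positions `j` such that `Z(B;π;g)` is empty whenever
`g j > 0`. -/
def JSet (B : Set PermAny) {k : ℕ} (π : Equiv.Perm (Fin k)) : Set (Fin (k + 1)) :=
  {j | ∀ g : Fin (k + 1) → ℕ, 0 < g j → ZSet B π g = ∅}

/-- `d_r(π)`: delete the entry at position `r` from `π` and standardize. -/
def delEntry {k : ℕ} (π : Equiv.Perm (Fin (k + 1))) (r : Fin (k + 1)) : Equiv.Perm (Fin k) :=
  Equiv.removeNone ((finSuccEquiv' r).symm.trans (π.trans (finSuccEquiv' (π r))))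

/-- `d_r(g)`: merge the gaps on either side of position `r`. -/
def delGap {k : ℕ} (g : Fin (k + 2) → ℕ) (r : Fin (k + 1)) : Fin (k + 1) → ℕ :=
  fun j =>
    if (j : ℕ) < (r : ℕ) then g (Fin.castSucc j)
    else if (j : ℕ) = (r : ℕ) then g (Fin.castSucc j) + g j.succ
    else g j.succ

/-- The entry `π r` is ES-reducible for `π` with respect to `B`
(Zeilberger's original notion). -/
def ESRed (B : Set PermAny) {k : ℕ} (π : Equiv.Perm (Fin (k + 1))) (r : Fin (k + 1)) : Prop :=
  ∀ g : Fin (k + 2) → ℕ, (∀ j ∈ JSet B π, g j = 0) →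
    (ZSet B π g).ncard = (ZSet B (delEntry π r) (delGap g r)).ncard

/-- The entry `π r` is ES⁺-reducible for `π` with respect to `B`. -/
def ESPlusRed (B : Set PermAny) {k : ℕ} (π : Equiv.Perm (Fin (k + 1))) (r : Fin (k + 1)) : Prop :=
  ∀ g : Fin (k + 2) → ℕ, (ZSet B π g).Nonempty →
    (ZSet B π g).ncard = (ZSet B (delEntry π r) (delGap g r)).ncard

/-- `G_r(π)`: the largest lower order ideal of gap vectors `g` such that for all
`h ≤ g`, either `Z(B;π;h)` is nonempty or `Z(B;d_r(π);d_r(h))` is empty. -/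
def GrSet (B : Set PermAny) {k : ℕ} (π : Equiv.Perm (Fin (k + 1))) (r : Fin (k + 1)) :
    Set (Fin (k + 2) → ℕ) :=
  {g | ∀ h : Fin (k + 2) → ℕ, h ≤ g →
    (ZSet B π h).Nonempty ∨ ZSet B (delEntry π r) (delGap h r) = ∅}

noncomputable def p321 : Equiv.Perm (Fin 3) := Equiv.ofBijective ![2, 1, 0] (by decide)
noncomputable def p2341 : Equiv.Perm (Fin 4) := Equiv.ofBijective ![1, 2, 3, 0] (by decide)
noncomputable def p3412 : Equiv.Perm (Fin 4) := Equiv.ofBijective ![2, 3, 0, 1] (by decide)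
noncomputable def p4123 : Equiv.Perm (Fin 4) := Equiv.ofBijective ![3, 0, 1, 2] (by decide)

namespace SigmaKAux

def fσ (k p : ℕ) : ℕ :=
  if p % 2 = 0 then (if p = 2 * k - 2 then 2 * k - 1 else p + 2)
  else (if p = 1 then 0 else p - 2)

lemma fσ_lt (k p : ℕ) (hp : p < 2 * k) : fσ k p < 2 * k := by
  unfold fσ; split_ifs <;> omega

lemma fσ_inj (k p q : ℕ) (hp : p < 2 * k) (hq : q < 2 * k) (h : fσ k p = fσ k q) : p = q := by
  unfold fσ at h; split_ifs at h <;> omega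

lemma fσ_odd (k p : ℕ) (hp : p % 2 = 1) :
    (p = 1 ∧ fσ k p = 0) ∨ (p ≠ 1 ∧ fσ k p = p - 2) := by
  unfold fσ; split_ifs <;> omega

lemma fσ_even (k p : ℕ) (hp : p % 2 = 0) :
    (p = 2 * k - 2 ∧ fσ k p = 2 * k - 1) ∨ (p ≠ 2 * k - 2 ∧ fσ k p = p + 2) := by
  unfold fσ; split_ifs <;> omega

noncomputable def sigmaK (k : ℕ) : Equiv.Perm (Fin (2 * k)) :=
  Equiv.ofBijective (fun p => ⟨fσ k p.val, fσ_lt k p.val p.isLt⟩)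
    (Finite.injective_iff_bijective.mp fun p q h =>
      Fin.ext (fσ_inj k p.val q.val p.isLt q.isLt (by simpa using congrArg Fin.val h)))

lemma sigmaK_apply (k : ℕ) (p : Fin (2 * k)) : ((sigmaK k p) : ℕ) = fσ k p.val := rfl

lemma inv_struct {k : ℕ} (σ : Equiv.Perm (Fin (2 * k)))
    (hσ : ∀ p : Fin (2 * k), ((σ p) : ℕ) = fσ k p.val)
    (p q : Fin (2 * k)) (hlt : p < q) (hgt : σ q < σ p) :
    (p : ℕ) % 2 = 0 ∧ ((q : ℕ) = (p : ℕ) + 1 ∨ (q : ℕ) = (p : ℕ) + 3) := by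
  have hp := p.isLt
  have hq := q.isLt
  rw [Fin.lt_def] at hlt hgt
  rw [hσ p, hσ q] at hgt
  unfold fσ at hgt
  split_ifs at hgt <;> omega

lemma core {k : ℕ} (hk : 2 ≤ k) (σ : Equiv.Perm (Fin (2 * k)))
    (hσ : ∀ p : Fin (2 * k), ((σ p) : ℕ) = fσ k p.val) :
    IsSimplePerm σ ∧ ¬ ContainsPat p321 σ ∧ ¬ ContainsPat p2341 σ ∧
      ¬ ContainsPat p3412 σ ∧ ¬ ContainsPat p4123 σ := by
  refine ⟨?_, ?_, ?_, ?_, ?_⟩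
  · -- simple
    rintro a b ⟨hab, c, himg⟩
    by_cases h : (a : ℕ) = (b : ℕ)
    · exact Or.inl (Fin.ext h)
    right
    have ha := a.isLt
    have hb := b.isLt
    have hab' : (a : ℕ) < (b : ℕ) := lt_of_le_of_ne (Fin.le_def.mp hab) h
    set qn : ℕ := if (a : ℕ) % 2 = 1 then (a : ℕ) else (a : ℕ) + 1 with hqn
    set pn : ℕ := if (b : ℕ) % 2 = 0 then (b : ℕ) else (b : ℕ) - 1 with hpn
    have hq1 : qn % 2 = 1 ∧ (a : ℕ) ≤ qn ∧ qn ≤ (a : ℕ) + 1 := by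
      rw [hqn]; split_ifs <;> omega
    have hp1 : pn % 2 = 0 ∧ (b : ℕ) - 1 ≤ pn ∧ pn ≤ (b : ℕ) := by
      rw [hpn]; split_ifs <;> omega
    have hqb : qn ≤ (b : ℕ) := by omega
    have hap : (a : ℕ) ≤ pn := by omega
    have hqmem : (σ ⟨qn, by omega⟩ : ℕ) ∈
        (Finset.Icc a b).image (fun i => ((σ i : ℕ))) :=
      Finset.mem_image_of_mem _ (Finset.mem_Icc.mpr
        ⟨Fin.le_def.mpr hq1.2.1, Fin.le_def.mpr hqb⟩)
    have hpmem : (σ ⟨pn, by omega⟩ : ℕ) ∈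
        (Finset.Icc a b).image (fun i => ((σ i : ℕ))) :=
      Finset.mem_image_of_mem _ (Finset.mem_Icc.mpr
        ⟨Fin.le_def.mpr hap, Fin.le_def.mpr hp1.2.2⟩)
    rw [himg, Finset.mem_Icc] at hqmem hpmem
    rw [hσ ⟨qn, by omega⟩] at hqmem
    rw [hσ ⟨pn, by omega⟩] at hpmem
    simp only at hqmem hpmem
    have hvq := fσ_odd k qn hq1.1
    have hvp := fσ_even k pn hp1.1
    omega
  · -- 321
    rintro ⟨f, hm, hiff⟩
    have h10 : σ (f 1) < σ (f 0) := (hiff 1 0).mp (by decide)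
    have h21 : σ (f 2) < σ (f 1) := (hiff 2 1).mp (by decide)
    obtain ⟨he0, hd0⟩ := inv_struct σ hσ (f 0) (f 1) (hm (by decide)) h10
    obtain ⟨he1, hd1⟩ := inv_struct σ hσ (f 1) (f 2) (hm (by decide)) h21
    omega
  · -- 2341
    rintro ⟨f, hm, hiff⟩
    have h30 : σ (f 3) < σ (f 0) := (hiff 3 0).mp (by decide)
    have h31 : σ (f 3) < σ (f 1) := (hiff 3 1).mp (by decide)
    have h32 : σ (f 3) < σ (f 2) := (hiff 3 2).mp (by decide)
    obtain ⟨-, hd0⟩ := inv_struct σ hσ (f 0) (f 3) (hm (by decide)) h30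
    obtain ⟨-, hd1⟩ := inv_struct σ hσ (f 1) (f 3) (hm (by decide)) h31
    obtain ⟨-, hd2⟩ := inv_struct σ hσ (f 2) (f 3) (hm (by decide)) h32
    have m01 : (f 0 : ℕ) < (f 1 : ℕ) := Fin.lt_def.mp (hm (by decide))
    have m12 : (f 1 : ℕ) < (f 2 : ℕ) := Fin.lt_def.mp (hm (by decide))
    omega
  · -- 3412
    rintro ⟨f, hm, hiff⟩
    have h20 : σ (f 2) < σ (f 0) := (hiff 2 0).mp (by decide)
    have h30 : σ (f 3) < σ (f 0) := (hiff 3 0).mp (by decide)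
    have h31 : σ (f 3) < σ (f 1) := (hiff 3 1).mp (by decide)
    have h21 : σ (f 2) < σ (f 1) := (hiff 2 1).mp (by decide)
    obtain ⟨-, hd0⟩ := inv_struct σ hσ (f 0) (f 3) (hm (by decide)) h30
    obtain ⟨-, hd1⟩ := inv_struct σ hσ (f 1) (f 3) (hm (by decide)) h31
    obtain ⟨-, hd2⟩ := inv_struct σ hσ (f 1) (f 2) (hm (by decide)) h21
    have m01 : (f 0 : ℕ) < (f 1 : ℕ) := Fin.lt_def.mp (hm (by decide))
    have m23 : (f 2 : ℕ) < (f 3 : ℕ) := Fin.lt_def.mp (hm (by decide))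
    omega
  · -- 4123
    rintro ⟨f, hm, hiff⟩
    have h10 : σ (f 1) < σ (f 0) := (hiff 1 0).mp (by decide)
    have h20 : σ (f 2) < σ (f 0) := (hiff 2 0).mp (by decide)
    have h30 : σ (f 3) < σ (f 0) := (hiff 3 0).mp (by decide)
    obtain ⟨-, hd1⟩ := inv_struct σ hσ (f 0) (f 1) (hm (by decide)) h10
    obtain ⟨-, hd2⟩ := inv_struct σ hσ (f 0) (f 2) (hm (by decide)) h20
    obtain ⟨-, hd3⟩ := inv_struct σ hσ (f 0) (f 3) (hm (by decide)) h30
    have m12 : (f 1 : ℕ) < (f 2 : ℕ) := Fin.lt_def.mp (hm (by decide))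
    have m23 : (f 2 : ℕ) < (f 3 : ℕ) := Fin.lt_def.mp (hm (by decide))
    omega

end SigmaKAux


lemma SigmaKAux.formula_of (k : ℕ) (hk : 2 ≤ k) (σ : Equiv.Perm (Fin (2 * k)))
    (h1 : ∀ i : ℕ, 1 ≤ i → i ≤ k - 1 →
      ∀ p : Fin (2 * k), (p : ℕ) = 2 * i - 2 → (σ p : ℕ) = 2 * i)
    (h2 : ∀ p : Fin (2 * k), (p : ℕ) = 2 * k - 2 → (σ p : ℕ) = 2 * k - 1)
    (h3 : ∀ p : Fin (2 * k), (p : ℕ) = 1 → (σ p : ℕ) = 0)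
    (h4 : ∀ i : ℕ, 2 ≤ i → i ≤ k →
      ∀ p : Fin (2 * k), (p : ℕ) = 2 * i - 1 → (σ p : ℕ) = 2 * i - 3) :
    ∀ p : Fin (2 * k), ((σ p) : ℕ) = SigmaKAux.fσ k p.val := by
  intro p
  have hp := p.isLt
  unfold SigmaKAux.fσ
  by_cases he : (p : ℕ) % 2 = 0
  · rw [if_pos he]
    by_cases h2k : (p : ℕ) = 2 * k - 2
    · rw [if_pos h2k]; exact h2 p h2k
    · rw [if_neg h2k]
      have := h1 ((p : ℕ) / 2 + 1) (by omega) (by omega) p (by omega)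
      omega
  · rw [if_neg he]
    by_cases hone : (p : ℕ) = 1
    · rw [if_pos hone]; exact h3 p hone
    · rw [if_neg hone]
      have := h4 (((p : ℕ) + 1) / 2) (by omega) (by omega) p (by omega)
      omega

/-- For `k ≥ 2`, the permutation `σ_k` of length `2k` defined
(1-indexed) by `σ(2i−1) = 2i+1` for `1 ≤ i ≤ k−1`, `σ(2k−1) = 2k`, `σ(2) = 1`,
and `σ(2i) = 2i−2` for `2 ≤ i ≤ k` is simple and avoids each of 321, 2341,
3412, 4123; consequently `Av(321, 2341, 3412, 4123)` contains infinitely many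
simple permutations.  (The defining equations are stated 0-indexed: position
`p` corresponds to 1-indexed position `p+1` and value `v` to `v+1`.) -/
theorem sigma_k_simple_and_avoids (k : ℕ) (hk : 2 ≤ k) (σ : Equiv.Perm (Fin (2 * k)))
    (h1 : ∀ i : ℕ, 1 ≤ i → i ≤ k - 1 →
      ∀ p : Fin (2 * k), (p : ℕ) = 2 * i - 2 → (σ p : ℕ) = 2 * i)
    (h2 : ∀ p : Fin (2 * k), (p : ℕ) = 2 * k - 2 → (σ p : ℕ) = 2 * k - 1)
    (h3 : ∀ p : Fin (2 * k), (p : ℕ) = 1 → (σ p : ℕ) = 0)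
    (h4 : ∀ i : ℕ, 2 ≤ i → i ≤ k →
      ∀ p : Fin (2 * k), (p : ℕ) = 2 * i - 1 → (σ p : ℕ) = 2 * i - 3) :
    IsSimplePerm σ ∧
    ¬ ContainsPat p321 σ ∧ ¬ ContainsPat p2341 σ ∧
    ¬ ContainsPat p3412 σ ∧ ¬ ContainsPat p4123 σ ∧
    {p : PermAny |
      p ∈ AvSet ({⟨3, p321⟩, ⟨4, p2341⟩, ⟨4, p3412⟩, ⟨4, p4123⟩} : Set PermAny) ∧
      IsSimplePerm p.2}.Infinite := by
  have hσ := SigmaKAux.formula_of k hk σ h1 h2 h3 h4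
  obtain ⟨hs, ha1, ha2, ha3, ha4⟩ := SigmaKAux.core hk σ hσ
  refine ⟨hs, ha1, ha2, ha3, ha4, ?_⟩
  apply Set.infinite_of_injective_forall_mem
    (f := fun n : ℕ => (⟨2 * (n + 2), SigmaKAux.sigmaK (n + 2)⟩ : PermAny))
  · intro m n h
    have := congrArg Sigma.fst h
    simp only at this
    omega
  · intro n
    obtain ⟨hs', hb1, hb2, hb3, hb4⟩ :=
      SigmaKAux.core (k := n + 2) (by omega) (SigmaKAux.sigmaK (n + 2)) (fun p => rfl)
    refine ⟨?_, hs'⟩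
    intro b hb
    simp only [Set.mem_insert_iff, Set.mem_singleton_iff] at hb
    rcases hb with rfl | rfl | rfl | rfl
    · exact hb1
    · exact hb2
    · exact hb3
    · exact hb4
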